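/- Given W_in ∈ ℝ^{p×m} (p ≥ m) with SVD W_in = Ω Σ_in Θᵀ and α ≥ 0, the matrix W_out = Ω Σ_out Θᵀ obtained by clipping each singular value σ_i(W_in) into the interval [√(max{0,1−α}), √(1+α)] minimizes ‖W − W_in‖_F² over all W ∈ ℝ^{p×m} satisfying |σ_i²(W) − 1| ≤ α for all i. -/

import Mathlib

/-!
Multiplying by the orthogonal factors preserves the Frobenius norm and conjugates `WᵀW`, so
everything reduces to the rectangular diagonal `Sin`, whose `j`-th column is `σⱼ eⱼ` with
`σⱼ ≥ 0`. Since `WᵀW ⪰ 0`, the constraint says that the Rayleigh quotient of `WᵀW` takes values in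
`[a, b] = [max 0 (1 - α), 1 + α]`. For `Wout` this holds because `WoutᵀWout = Θ diag(clip(σⱼ)²) Θᵀ`.
For a feasible `W`, the `j`-th column of `A = Oᵀ W Θ` has squared norm `(AᵀA)ⱼⱼ`, the Rayleigh
quotient of `WᵀW` at `Θ eⱼ`, so its norm `r` lies in `[√a, √b]`. Its distance to `σⱼ eⱼ` is then at
least `|r - σⱼ| ≥ |clip(σⱼ) - σⱼ|`, the distance between the `j`-th columns of `Sout` and `Sin`.
Summing over the columns gives optimality, with no appeal to von Neumann's trace inequality.
-/

open Matrix

noncomputable def frobSq {ι κ : Type*} [Fintype ι] [Fintype κ]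
    (A : Matrix ι κ ℝ) : ℝ := ∑ i, ∑ j, (A i j) ^ 2

theorem Matrix.isHermitian_transpose_mul_self {ι κ : Type*} [Fintype ι]
    (A : Matrix ι κ ℝ) : (Aᵀ * A).IsHermitian := by
  simpa using Matrix.isHermitian_conjTranspose_mul_self A

open Set

def clip (τ T x : ℝ) : ℝ := min (max x τ) T

lemma clip_mem_Icc {τ T : ℝ} (h : τ ≤ T) (x : ℝ) : clip τ T x ∈ Icc τ T :=
  ⟨le_min (le_max_right _ _) h, min_le_right _ _⟩

lemma sq_clip_sub_le {τ T r : ℝ} (hr : r ∈ Icc τ T) (σ : ℝ) :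
    (clip τ T σ - σ) ^ 2 ≤ (r - σ) ^ 2 := by
  obtain ⟨hτr, hrT⟩ := hr
  unfold clip
  rcases le_total σ τ with h₁ | h₁
  · rw [max_eq_right h₁, min_eq_left (hτr.trans hrT)]
    nlinarith
  rcases le_total σ T with h₂ | h₂
  · rw [max_eq_left h₁, min_eq_left h₂]
    simpa using sq_nonneg (r - σ)
  · rw [max_eq_left h₁, min_eq_right h₂]
    nlinarith

lemma sum_sq_sub_single {ι : Type*} [Fintype ι] [DecidableEq ι] (c : ι → ℝ) (i₀ : ι) (σ : ℝ) :
    ∑ i, (c - Pi.single i₀ σ : ι → ℝ) i ^ 2 = ∑ i, c i ^ 2 - 2 * σ * c i₀ + σ ^ 2 := by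
  have hsq (v : ι → ℝ) : ∑ i, v i ^ 2 = v ⬝ᵥ v := by simp only [dotProduct, sq]
  rw [hsq, hsq, sub_dotProduct, dotProduct_sub, dotProduct_sub, dotProduct_single,
    single_dotProduct, single_dotProduct, Pi.single_eq_same]
  ring

lemma sq_sqrt_sum_sq_sub_le_sum_sq_sub_single {ι : Type*} [Fintype ι] [DecidableEq ι]
    (c : ι → ℝ) (i₀ : ι) {σ : ℝ} (hσ : 0 ≤ σ) :
    (√(∑ i, c i ^ 2) - σ) ^ 2 ≤ ∑ i, (c - Pi.single i₀ σ : ι → ℝ) i ^ 2 := by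
  have hs : 0 ≤ ∑ i, c i ^ 2 := by positivity
  have hc : c i₀ ≤ √(∑ i, c i ^ 2) :=
    Real.le_sqrt_of_sq_le (Finset.single_le_sum (fun i _ => sq_nonneg (c i)) (Finset.mem_univ i₀))
  rw [sum_sq_sub_single, sub_sq, Real.sq_sqrt hs]
  nlinarith

lemma abs_sub_one_le_iff_mem_Icc {x α : ℝ} (hx : 0 ≤ x) :
    |x - 1| ≤ α ↔ x ∈ Icc (max 0 (1 - α)) (1 + α) := by
  rw [abs_le, mem_Icc, max_le_iff]
  constructor
  · rintro ⟨h₁, h₂⟩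
    exact ⟨⟨hx, by linarith⟩, by linarith⟩
  · rintro ⟨⟨-, h₁⟩, h₂⟩
    exact ⟨by linarith, by linarith⟩

lemma sq_mem_Icc_of_mem_Icc_sqrt {a b y : ℝ} (ha : 0 ≤ a) (hab : a ≤ b) (hy : y ∈ Icc √a √b) :
    y ^ 2 ∈ Icc a b := by
  have hy₀ : 0 ≤ y := (Real.sqrt_nonneg a).trans hy.1
  exact ⟨(Real.sqrt_le_left hy₀).1 hy.1, (Real.le_sqrt hy₀ (ha.trans hab)).1 hy.2⟩

namespace Matrix

section Rayleigh

variable {ι κ n : Type*} [Fintype ι] [Fintype n]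

lemma transpose_mul_self_apply_self (A : Matrix ι κ ℝ) (j : κ) :
    (Aᵀ * A) j j = ∑ i, A i j ^ 2 := by
  simp only [mul_apply, transpose_apply, sq]

lemma frobSq_eq_sum_sum_col [Fintype κ] (A : Matrix ι κ ℝ) :
    frobSq A = ∑ j, ∑ i, A i j ^ 2 :=
  Finset.sum_comm

lemma frobSq_eq_trace [Fintype κ] (A : Matrix ι κ ℝ) : frobSq A = (Aᵀ * A).trace := by
  simp only [frobSq_eq_sum_sum_col, trace, diag, transpose_mul_self_apply_self]

lemma transpose_mul_self_mul_mul {ι' κ' : Type*} [Fintype ι'] [Fintype κ] [DecidableEq ι]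
    {O : Matrix ι' ι ℝ} (hO : Oᵀ * O = 1) (M : Matrix ι κ ℝ) (Q : Matrix κ κ' ℝ) :
    (O * M * Q)ᵀ * (O * M * Q) = Qᵀ * (Mᵀ * M) * Q := by
  simp only [transpose_mul, Matrix.mul_assoc]
  rw [← Matrix.mul_assoc Oᵀ, hO, Matrix.one_mul]

lemma frobSq_mul_mul {ι' κ' : Type*} [Fintype ι'] [Fintype κ] [Fintype κ'] [DecidableEq ι]
    [DecidableEq κ] {O : Matrix ι' ι ℝ} {Q : Matrix κ κ' ℝ} (hO : Oᵀ * O = 1) (hQ : Q * Qᵀ = 1)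
    (M : Matrix ι κ ℝ) : frobSq (O * M * Q) = frobSq M := by
  rw [frobSq_eq_trace, frobSq_eq_trace, transpose_mul_self_mul_mul hO, Matrix.mul_assoc,
    trace_mul_comm, Matrix.mul_assoc, hQ, Matrix.mul_one]

def RayleighBounded (N : Matrix n n ℝ) (a b : ℝ) : Prop :=
  ∀ x : n → ℝ, a * (x ⬝ᵥ x) ≤ x ⬝ᵥ (N *ᵥ x) ∧ x ⬝ᵥ (N *ᵥ x) ≤ b * (x ⬝ᵥ x)

lemma dotProduct_transpose_mul_mul_mulVec [Fintype κ] (N : Matrix n n ℝ) (Q : Matrix n κ ℝ)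
    (x : κ → ℝ) :
    x ⬝ᵥ ((Qᵀ * N * Q) *ᵥ x) = (Q *ᵥ x) ⬝ᵥ (N *ᵥ (Q *ᵥ x)) := by
  rw [← mulVec_mulVec, ← mulVec_mulVec, dotProduct_mulVec, vecMul_transpose]

lemma RayleighBounded.transpose_mul_mul [Fintype κ] [DecidableEq n] [DecidableEq κ]
    {N : Matrix n n ℝ} {a b : ℝ} (hN : RayleighBounded N a b) {Q : Matrix n κ ℝ} (hQ : Qᵀ * Q = 1) :
    RayleighBounded (Qᵀ * N * Q) a b := by
  intro x
  have hnorm : (Q *ᵥ x) ⬝ᵥ (Q *ᵥ x) = x ⬝ᵥ x := by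
    simpa [hQ] using (dotProduct_transpose_mul_mul_mulVec 1 Q x).symm
  rw [dotProduct_transpose_mul_mul_mulVec, ← hnorm]
  exact hN (Q *ᵥ x)

lemma rayleighBounded_diagonal [DecidableEq n] {d : n → ℝ} {a b : ℝ}
    (hd : ∀ j, d j ∈ Icc a b) : RayleighBounded (diagonal d) a b := by
  intro x
  simp only [mulVec_diagonal, dotProduct, Finset.mul_sum]
  constructor <;> refine Finset.sum_le_sum fun j _ => ?_
  · nlinarith [(hd j).1, mul_self_nonneg (x j)]
  · nlinarith [(hd j).2, mul_self_nonneg (x j)]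

lemma RayleighBounded.apply_self_mem_Icc [DecidableEq n] {N : Matrix n n ℝ} {a b : ℝ}
    (hN : RayleighBounded N a b) (j : n) : N j j ∈ Icc a b := by
  simpa [mulVec_single_one, single_dotProduct] using hN (Pi.single j 1)

lemma IsHermitian.eigenvalues_mem_Icc_iff [DecidableEq n] {N : Matrix n n ℝ}
    (hN : N.IsHermitian) {a b : ℝ} :
    (∀ i, hN.eigenvalues i ∈ Icc a b) ↔ RayleighBounded N a b := by
  constructor
  · intro h
    set U : Matrix n n ℝ := (hN.eigenvectorUnitary : Matrix n n ℝ)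
    have hUU : Uᵀᵀ * Uᵀ = 1 := by
      simpa [U, star_eq_conjTranspose] using Unitary.coe_mul_star_self hN.eigenvectorUnitary
    have hspec : N = Uᵀᵀ * diagonal hN.eigenvalues * Uᵀ := by
      simpa [U, star_eq_conjTranspose] using hN.spectral_theorem
    rw [hspec]
    exact (rayleighBounded_diagonal h).transpose_mul_mul hUU
  · intro h i
    set v : n → ℝ := ⇑(hN.eigenvectorBasis i)
    have hvv : v ⬝ᵥ v = 1 := by
      have := real_inner_self_eq_norm_sq (hN.eigenvectorBasis i)
      rw [hN.eigenvectorBasis.orthonormal.1 i, EuclideanSpace.inner_eq_star_dotProduct] at this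
      simpa [v, dotProduct_comm] using this
    have hv : v ⬝ᵥ (N *ᵥ v) = hN.eigenvalues i := by
      rw [hN.mulVec_eigenvectorBasis, dotProduct_smul, hvv, smul_eq_mul, mul_one]
    simpa [hvv, hv] using h v

lemma forall_abs_eigenvalues_sub_one_le_iff [Fintype κ] [DecidableEq κ] (W : Matrix ι κ ℝ) (α : ℝ) :
    (∀ i, |(isHermitian_transpose_mul_self W).eigenvalues i - 1| ≤ α) ↔
      RayleighBounded (Wᵀ * W) (max 0 (1 - α)) (1 + α) := by
  rw [← IsHermitian.eigenvalues_mem_Icc_iff (isHermitian_transpose_mul_self W)]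
  exact forall_congr' fun i =>
    abs_sub_one_le_iff_mem_Icc (eigenvalues_conjTranspose_mul_self_nonneg W i)

end Rayleigh

lemma transpose_apply_eq_single_castLE {R : Type*} [Zero R] {p m : ℕ} (hpm : m ≤ p)
    {S : Matrix (Fin p) (Fin m) R} (hS : ∀ (i : Fin p) (j : Fin m), (i : ℕ) ≠ j → S i j = 0)
    (j : Fin m) : Sᵀ j = Pi.single (Fin.castLE hpm j) (S (Fin.castLE hpm j) j) := by
  ext i
  rw [transpose_apply]
  by_cases h : i = Fin.castLE hpm j
  · subst h
    rw [Pi.single_eq_same]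
  · rw [Pi.single_eq_of_ne h, hS i j fun hij => h (Fin.ext hij)]

section SingleEntryColumns

variable {ι κ : Type*} [Fintype ι] [DecidableEq ι] {e : κ → ι}

lemma transpose_mul_self_eq_diagonal [DecidableEq κ] (he : Function.Injective e)
    {S : Matrix ι κ ℝ} {d : κ → ℝ} (hS : ∀ j, Sᵀ j = Pi.single (e j) (d j)) :
    Sᵀ * S = diagonal fun j => d j ^ 2 := by
  ext j k
  rw [mul_apply', diagonal_apply]
  change Sᵀ j ⬝ᵥ Sᵀ k = _
  rw [hS, hS, single_dotProduct]
  by_cases hjk : j = k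
  · subst hjk
    rw [Pi.single_eq_same, if_pos rfl, sq]
  · rw [Pi.single_eq_of_ne (he.ne hjk), if_neg hjk, mul_zero]

lemma frobSq_clip_sub_le [Fintype κ] {τ T : ℝ} {d : κ → ℝ} (hd : ∀ j, 0 ≤ d j)
    {S C A : Matrix ι κ ℝ} (hS : ∀ j, Sᵀ j = Pi.single (e j) (d j))
    (hC : ∀ j, Cᵀ j = Pi.single (e j) (clip τ T (d j)))
    (hA : ∀ j, √(∑ i, A i j ^ 2) ∈ Icc τ T) : frobSq (C - S) ≤ frobSq (A - S) := by
  rw [frobSq_eq_sum_sum_col, frobSq_eq_sum_sum_col]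
  refine Finset.sum_le_sum fun j _ => ?_
  calc ∑ i, (C - S) i j ^ 2 = ∑ i, (Cᵀ j - Sᵀ j) i ^ 2 := rfl
    _ = (clip τ T (d j) - d j) ^ 2 := by
        rw [hC, hS, ← Pi.single_sub]
        simp [Pi.single_apply]
    _ ≤ (√(∑ i, A i j ^ 2) - d j) ^ 2 := sq_clip_sub_le (hA j) _
    _ ≤ ∑ i, (Aᵀ j - Pi.single (e j) (d j) : ι → ℝ) i ^ 2 :=
        sq_sqrt_sum_sq_sub_le_sum_sq_sub_single _ _ (hd j)
    _ = ∑ i, (A - S) i j ^ 2 := by rw [← hS]; rfl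

end SingleEntryColumns

end Matrix

/-- Given `W_in ∈ ℝ^{p×m}` (`p ≥ m`) with SVD `W_in = Ω Σ_in Θᵀ` and `α ≥ 0`,
the matrix `W_out = Ω Σ_out Θᵀ`, obtained by clipping each singular value of
`W_in` into `[√(max 0 (1-α)), √(1+α)]`, satisfies the soft orthonormality
constraints `|σ_i²(W) - 1| ≤ α` (i.e. every eigenvalue `μ` of `WᵀW` satisfies
`|μ - 1| ≤ α`) and minimizes `‖W - W_in‖_F²` over all matrices satisfying
those constraints. -/
theorem soft_orthonormality_projection
    (p m : ℕ) (hpm : m ≤ p) (α : ℝ) (hα : 0 ≤ α)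
    (O : Matrix (Fin p) (Fin p) ℝ) (hO : Oᵀ * O = 1)
    (Θ : Matrix (Fin m) (Fin m) ℝ) (hΘ : Θᵀ * Θ = 1)
    (Sin : Matrix (Fin p) (Fin m) ℝ)
    (hdiag : ∀ (i : Fin p) (j : Fin m), (i : ℕ) ≠ (j : ℕ) → Sin i j = 0)
    (hnonneg : ∀ (i : Fin p) (j : Fin m), (i : ℕ) = (j : ℕ) → 0 ≤ Sin i j)
    (Win : Matrix (Fin p) (Fin m) ℝ) (hWin : Win = O * Sin * Θᵀ)
    (Sout : Matrix (Fin p) (Fin m) ℝ)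
    (hSout : ∀ (i : Fin p) (j : Fin m),
      Sout i j =
        if (i : ℕ) = (j : ℕ) then
          min (max (Sin i j) (Real.sqrt (max 0 (1 - α)))) (Real.sqrt (1 + α))
        else 0)
    (Wout : Matrix (Fin p) (Fin m) ℝ) (hWout : Wout = O * Sout * Θᵀ) :
    (∀ i : Fin m,
        |(Matrix.isHermitian_transpose_mul_self Wout).eigenvalues i - 1| ≤ α) ∧
      ∀ W : Matrix (Fin p) (Fin m) ℝ,
        (∀ i : Fin m,
          |(Matrix.isHermitian_transpose_mul_self W).eigenvalues i - 1| ≤ α) →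
        frobSq (Wout - Win) ≤ frobSq (W - Win) := by
  have hab : max 0 (1 - α) ≤ 1 + α := max_le (by linarith) (by linarith)
  have hOt : Oᵀᵀ * Oᵀ = 1 := by rw [transpose_transpose]; exact mul_eq_one_comm.mp hO
  have hΘt : Θᵀᵀ * Θᵀ = 1 := by rw [transpose_transpose]; exact mul_eq_one_comm.mp hΘ
  have hSin := transpose_apply_eq_single_castLE hpm hdiag
  have hSout' (j : Fin m) : Soutᵀ j = Pi.single (Fin.castLE hpm j)
      (clip √(max 0 (1 - α)) √(1 + α) (Sin (Fin.castLE hpm j) j)) := by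
    rw [transpose_apply_eq_single_castLE hpm (fun i j h => by rw [hSout, if_neg h]), hSout,
      if_pos (Fin.val_castLE hpm j)]
    rfl
  refine ⟨(forall_abs_eigenvalues_sub_one_le_iff Wout α).2 ?_, fun W hW => ?_⟩
  · rw [hWout, transpose_mul_self_mul_mul hO,
      transpose_mul_self_eq_diagonal (Fin.castLE_injective hpm) hSout']
    exact (rayleighBounded_diagonal fun j => sq_mem_Icc_of_mem_Icc_sqrt (le_max_left _ _) hab
      (clip_mem_Icc (Real.sqrt_le_sqrt hab) _)).transpose_mul_mul hΘt
  · set A := Oᵀ * W * Θ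
    have hA (j : Fin m) : √(∑ i, A i j ^ 2) ∈ Icc √(max 0 (1 - α)) √(1 + α) := by
      have hAA := (((forall_abs_eigenvalues_sub_one_le_iff W α).1 hW).transpose_mul_mul
        hΘ).apply_self_mem_Icc j
      rw [← transpose_mul_self_mul_mul hOt, transpose_mul_self_apply_self] at hAA
      exact ⟨Real.sqrt_le_sqrt hAA.1, Real.sqrt_le_sqrt hAA.2⟩
    calc frobSq (Wout - Win) = frobSq (Sout - Sin) := by
          rw [hWout, hWin, ← Matrix.sub_mul, ← Matrix.mul_sub,
            frobSq_mul_mul hO (by rwa [transpose_transpose])]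
      _ ≤ frobSq (A - Sin) :=
          frobSq_clip_sub_le (fun j => hnonneg _ _ rfl) hSin hSout' hA
      _ = frobSq (Oᵀ * (W - Win) * Θ) := by
          simp only [hWin, Matrix.mul_sub, Matrix.sub_mul, ← Matrix.mul_assoc, hO, Matrix.one_mul]
          rw [Matrix.mul_assoc Sin, hΘ, Matrix.mul_one]
      _ = frobSq (W - Win) := frobSq_mul_mul hOt (by simpa using hΘt) _
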